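/- Consider the 3×3 unit grid G = {0,1,2} × {0,1,2} ⊂ ℝ² with faulty nodes f₁ = (0,0) and f₂ = (0,1), and let C = G \ {f₁, f₂} be the set of correct nodes. Let c, T_r, R_min > 0 satisfy c·T_r = (9/4)·R_min (so that the transmission range r_t = √(c·T_r/R_min) equals 3/2). Then there exist a point k ∈ ℝ² with k ∉ G and dist(k, (1,1)) ≤ 3/2, and transmission strengths T₁, T₂ > 0, such that: (i) for every w ∈ C and every i ∈ {1,2}, either c·T_i/dist(f_i, w)² < R_min (w does not receive the i-th transmission) or c·T_i/dist(f_i, w)² = c·T_r/dist(k, w)² (w receives it with exactly the RSS of a transmission from k at strength T_r); and (ii) every w ∈ C with dist(k, w) ≤ 3/2 receives at least one of the two transmissions, i.e. c·T_i/dist(f_i, w)² ≥ R_min for some i ∈ {1,2}. In other words, k is a perfect snare for (1,1): the two faulty nodes can jointly simulate a fictitious node at k without generating any explicit or implicit conflict at the correct nodes. -/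

import Mathlib

/-- A point of the Euclidean plane with the given coordinates. -/
noncomputable def planePt (a b : ℝ) : EuclideanSpace ℝ (Fin 2) := WithLp.toLp 2 ![a, b]

/-- The 3×3 unit grid `{0,1,2} × {0,1,2}` as a subset of the Euclidean plane. -/
noncomputable def grid3 : Set (EuclideanSpace ℝ (Fin 2)) :=
  {p | ∃ a ∈ ({0, 1, 2} : Set ℝ), ∃ b ∈ ({0, 1, 2} : Set ℝ), p = planePt a b}

/-!
Take `k = (-1/4, 3/4)`. Its squared distances to the correct nodes are `17/8` for `(1,0)`,
`13/8` for `(0,2)` and `(1,1)`, and more than `r_t² = 9/4` for the others. Let `f₁` transmit at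
`(8/17) T_r`: only nodes within squared distance `18/17` of `f₁` hear it, i.e. only `(1,0)`,
which then receives exactly `c T_r / (17/8)`. Likewise `f₂` at `(8/13) T_r` is heard exactly
by its neighbours `(0,2)` and `(1,1)`, each with the RSS `c T_r / (13/8)` of `k`.
-/

@[simp]
lemma planePt_inj {a b a' b' : ℝ} : planePt a b = planePt a' b' ↔ a = a' ∧ b = b' := by
  simp [planePt, (WithLp.toLp_injective 2).eq_iff]

lemma dist_planePt_sq (a b a' b' : ℝ) :
    dist (planePt a b) (planePt a' b') ^ 2 = (a - a') ^ 2 + (b - b') ^ 2 := by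
  rw [EuclideanSpace.dist_eq, Real.sq_sqrt (by positivity)]
  simp [planePt, Fin.sum_univ_two, Real.dist_eq, sq_abs]

lemma dist_planePt_le_iff {a b a' b' r : ℝ} (hr : 0 ≤ r) :
    dist (planePt a b) (planePt a' b') ≤ r ↔ (a - a') ^ 2 + (b - b') ^ 2 ≤ r ^ 2 := by
  rw [← dist_planePt_sq, pow_le_pow_iff_left₀ dist_nonneg hr two_ne_zero]

lemma planePt_mem_grid3_iff {a b : ℝ} :
    planePt a b ∈ grid3 ↔ a ∈ ({0, 1, 2} : Set ℝ) ∧ b ∈ ({0, 1, 2} : Set ℝ) := by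
  simp only [grid3, Set.mem_ofPred_eq, planePt_inj]
  grind

lemma forall_mem_grid3 {P : EuclideanSpace ℝ (Fin 2) → Prop} :
    (∀ w ∈ grid3, P w) ↔
      ∀ a ∈ ({0, 1, 2} : Set ℝ), ∀ b ∈ ({0, 1, 2} : Set ℝ), P (planePt a b) := by
  simp only [grid3, Set.mem_ofPred_eq]
  constructor
  · intro h a ha b hb
    exact h _ ⟨a, ha, b, hb, rfl⟩
  · rintro h _ ⟨a, ha, b, hb, rfl⟩
    exact h a ha b hb

namespace FreeSpace

/- Strengths are written as multiples `q * T_r` of `T_r`, and `ρ = c T_r / R_min` is the squared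
range `r_t²`, so that reception and mimicry become conditions on the squared distance `D`. -/

variable {c T_r R_min ρ : ℝ}

lemma rss_lt_iff (hR : 0 < R_min) (hrange : c * T_r = ρ * R_min) {q D : ℝ} (hD : 0 < D) :
    c * (q * T_r) / D < R_min ↔ ρ * q < D := by
  rw [div_lt_iff₀ hD, show c * (q * T_r) = ρ * q * R_min by linear_combination q * hrange,
    mul_comm R_min]
  exact mul_lt_mul_iff_left₀ hR

lemma le_rss_iff (hR : 0 < R_min) (hrange : c * T_r = ρ * R_min) {q D : ℝ} (hD : 0 < D) :
    R_min ≤ c * (q * T_r) / D ↔ D ≤ ρ * q := by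
  rw [← not_lt, rss_lt_iff hR hrange hD, not_lt]

lemma rss_eq_iff (hcT : c * T_r ≠ 0) {q D D' : ℝ} (hD : D ≠ 0) (hD' : D' ≠ 0) :
    c * (q * T_r) / D = c * T_r / D' ↔ q * D' = D := by
  rw [div_eq_div_iff hD hD', show c * (q * T_r) * D' = c * T_r * (q * D') by ring,
    mul_right_inj' hcT]

end FreeSpace

open FreeSpace in
/-- In the 3×3 unit grid with faulty nodes `f₁ = (0,0)` and `f₂ = (0,1)` and range
`r_t = √(c T_r / R_min) = 3/2` (i.e. `c T_r = (9/4) R_min`), there is a perfect snare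
for `(1,1)`: a point `k ∉ G` with `dist k (1,1) ≤ 3/2` and strengths `T₁, T₂ > 0` such
that (i) every correct node either does not receive the transmission of `f_i` at `T_i`
or receives it with exactly the RSS of a transmission from `k` at `T_r`, and (ii) every
correct node within distance `3/2` of `k` receives at least one of the two
transmissions. -/
theorem grid_two_faults_perfect_snare
    (c T_r R_min : ℝ) (hc : 0 < c) (hT : 0 < T_r) (hR : 0 < R_min)
    (hrange : c * T_r = (9 / 4) * R_min) :
    ∃ k : EuclideanSpace ℝ (Fin 2), k ∉ grid3 ∧ dist k (planePt 1 1) ≤ 3 / 2 ∧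
      ∃ T₁ T₂ : ℝ, 0 < T₁ ∧ 0 < T₂ ∧
        (∀ w ∈ grid3 \ {planePt 0 0, planePt 0 1},
          (c * T₁ / dist (planePt 0 0) w ^ 2 < R_min ∨
            c * T₁ / dist (planePt 0 0) w ^ 2 = c * T_r / dist k w ^ 2) ∧
          (c * T₂ / dist (planePt 0 1) w ^ 2 < R_min ∨
            c * T₂ / dist (planePt 0 1) w ^ 2 = c * T_r / dist k w ^ 2)) ∧
        (∀ w ∈ grid3 \ {planePt 0 0, planePt 0 1}, dist k w ≤ 3 / 2 →
          (R_min ≤ c * T₁ / dist (planePt 0 0) w ^ 2 ∨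
            R_min ≤ c * T₂ / dist (planePt 0 1) w ^ 2)) := by
  have hcT : c * T_r ≠ 0 := (mul_pos hc hT).ne'
  refine ⟨planePt (-1 / 4) (3 / 4), ?_, ?_, 8 / 17 * T_r, 8 / 13 * T_r, by positivity,
    by positivity, ?_, ?_⟩
  · norm_num [planePt_mem_grid3_iff]
  · norm_num [dist_planePt_le_iff]
  · simp only [Set.mem_sdiff, and_imp, forall_mem_grid3, forall_eq_or_imp, forall_eq,
      Set.mem_insert_iff, Set.mem_singleton_iff, planePt_inj, dist_planePt_sq]
    -- the rewrite fails (`D = 0`) only at `f₁`, `f₂` themselves, whose cases have a false premise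
    simp (disch := norm_num) only [rss_lt_iff hR hrange, rss_eq_iff hcT]
    norm_num
  · simp only [Set.mem_sdiff, and_imp, forall_mem_grid3, forall_eq_or_imp, forall_eq,
      Set.mem_insert_iff, Set.mem_singleton_iff, planePt_inj, dist_planePt_sq,
      dist_planePt_le_iff (show (0 : ℝ) ≤ 3 / 2 by norm_num)]
    simp (disch := norm_num) only [le_rss_iff hR hrange]
    norm_num
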